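/- arXiv:1011.0323 — 4 statements merged into one kernel-verified Lean document; each statement's English description precedes it below -/
import Mathlib

section
/- Let t be a real number with 0 ≤ t < 2π, let h : ℕ∪{0} → ℂ be any function, and let p be a positive integer. Then Σ_{j=0}^{p} φ(p−j)·ε_{p−j}·Σ_{ξ=0}^{j} h(j−ξ)·(i(t−π))^ξ/ξ! = −(1/2)·Σ_{ξ=0}^{p} h(p−ξ)·((2πi)^ξ/ξ!)·B_ξ(t/2π), where ε_m = (1+(−1)^m)/2 (so ε_m = 1 for m even and 0 for m odd), and for even non-negative integers m, φ(m) = (2^{1−m}−1)·ζ(m) with ζ the Riemann zeta-function (in particular φ(0) = −1/2); terms with p−j odd vanish because ε_{p−j} = 0. -/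
/-!
Put `A(m) = φ(m) ε_m` and `H(z) = Σ h(n) zⁿ`. The left side is the `p`-th coefficient of
`A(z) H(z) e^{i(t-π)z}`, so it suffices to identify `A(z) e^{i(t-π)z}`. Euler's formula for
`ζ(2k)` and `B_m(1/2) = (2^{1-m} - 1) B_m` (which also vanishes for odd `m`, as `ε_m` does) give
`A(z) = -½ Σ B_m(1/2) (2πiz)^m / m!`. Multiplying the generating function of the `B_m(y)` by
`e^{xz}` shifts `y` to `x + y`, and `i(t-π)z = 2πiz · (t/2π - 1/2)`, whence
`A(z) e^{i(t-π)z} = -½ Σ B_m(t/2π) (2πiz)^m / m!`.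
-/

open Finset PowerSeries
open scoped Real

section BernoulliEGF

variable {K : Type*} [Field K] [CharZero K]

noncomputable def bernoulliEGF (x : K) : K⟦X⟧ :=
  mk fun n => Polynomial.aeval x (Polynomial.bernoulli n) / n.factorial

theorem bernoulliEGF_mul_exp_sub_one (x : K) :
    bernoulliEGF x * (exp K - 1) = X * rescale x (exp K) := by
  rw [← Polynomial.bernoulli_generating_function x, bernoulliEGF]
  congr 2
  ext n
  rw [map_smul, Rat.smul_def]
  push_cast
  ring

theorem exp_sub_one_ne_zero : (exp K - 1 : K⟦X⟧) ≠ 0 := by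
  intro h
  simpa using congrArg (coeff 1) h

theorem bernoulliEGF_add (x y : K) :
    bernoulliEGF (x + y) = bernoulliEGF y * rescale x (exp K) := by
  apply mul_right_cancel₀ exp_sub_one_ne_zero
  rw [bernoulliEGF_mul_exp_sub_one, mul_right_comm, bernoulliEGF_mul_exp_sub_one, mul_assoc,
    exp_mul_exp_eq_exp_add, add_comm]

theorem coeff_rescale_exp (a : K) (n : ℕ) :
    coeff n (rescale a (exp K)) = a ^ n / n.factorial := by
  simp [coeff_rescale, coeff_exp, div_eq_mul_inv]

end BernoulliEGF

theorem coeff_mul_eq_sum_range {R : Type*} [CommSemiring R] (f g : R⟦X⟧) (n : ℕ) :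
    coeff n (f * g) = ∑ k ∈ range (n + 1), coeff (n - k) f * coeff k g := by
  rw [coeff_mul, ← Nat.sum_antidiagonal_swap, Nat.sum_antidiagonal_eq_sum_range_succ_mk]
  rfl

theorem bernoulli_aeval_ofReal (k : ℕ) (x : ℝ) :
    Polynomial.aeval (x : ℂ) (Polynomial.bernoulli k) = bernoulliFun k x := by
  rw [← Complex.coe_algebraMap, Polynomial.aeval_algebraMap_apply, bernoulliFun,
    Polynomial.eval_map_algebraMap]

theorem bernoulli_aeval_half (k : ℕ) :
    Polynomial.aeval (2⁻¹ : ℂ) (Polynomial.bernoulli k) = (2 / 2 ^ k - 1) * bernoulli k := by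
  have h := congrArg ((↑) : ℝ → ℂ) (bernoulliFun_eval_half k)
  push_cast at h
  rw [← h, ← bernoulli_aeval_ofReal]
  push_cast
  rfl

theorem bernoulli_aeval_half_of_odd (k : ℕ) :
    Polynomial.aeval (2⁻¹ : ℂ) (Polynomial.bernoulli (2 * k + 1)) = 0 := by
  have h := bernoulli_aeval_ofReal (2 * k + 1) 2⁻¹
  push_cast at h
  rw [h, bernoulliFun_eval_half_eq_zero, Complex.ofReal_zero]

noncomputable def phiEps (m : ℕ) : ℂ :=
  ((2 : ℂ) ^ ((1 : ℂ) - (m : ℂ)) - 1) * riemannZeta (m : ℂ) * ((1 + (-1 : ℂ) ^ m) / 2)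

theorem phiEps_eq_bernoulli_aeval_half (m : ℕ) :
    phiEps m = -(1 / 2) * (2 * π * Complex.I) ^ m / m.factorial
      * Polynomial.aeval (2⁻¹ : ℂ) (Polynomial.bernoulli m) := by
  obtain ⟨k, rfl | rfl⟩ := Nat.even_or_odd' m
  · have hcpow : (2 : ℂ) ^ ((1 : ℂ) - ((2 * k : ℕ) : ℂ)) = 2 / 2 ^ (2 * k) := by
      rw [Complex.cpow_sub _ _ two_ne_zero, Complex.cpow_one, Complex.cpow_natCast]
    have hzpow : (2 : ℂ) ^ (2 * k - 1 : ℤ) = 2 ^ (2 * k) / 2 := by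
      rw [zpow_sub₀ two_ne_zero, zpow_one]
      norm_cast
    have hI : (2 * π * Complex.I : ℂ) ^ (2 * k) = (-1) ^ k * 2 ^ (2 * k) * π ^ (2 * k) := by
      rw [mul_pow, pow_mul Complex.I, Complex.I_sq, mul_pow]
      ring
    rw [phiEps, hcpow, (even_two_mul k).neg_one_pow, Nat.cast_mul, Nat.cast_ofNat,
      riemannZeta_two_mul_nat', hzpow, bernoulli_aeval_half, hI]
    ring
  · rw [phiEps, bernoulli_aeval_half_of_odd, (odd_two_mul_add_one k).neg_one_pow]
    ring

theorem mk_phiEps :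
    mk phiEps = C (-(1 / 2) : ℂ) * rescale (2 * π * Complex.I) (bernoulliEGF 2⁻¹) := by
  ext n
  rw [coeff_mk, phiEps_eq_bernoulli_aeval_half, coeff_C_mul, coeff_rescale, bernoulliEGF,
    coeff_mk]
  ring

theorem mk_phiEps_mul_rescale_exp (x : ℂ) :
    mk phiEps * rescale (2 * π * Complex.I * x) (exp ℂ)
      = C (-(1 / 2) : ℂ) * rescale (2 * π * Complex.I) (bernoulliEGF (x + 2⁻¹)) := by
  rw [mk_phiEps, mul_comm _ x, ← rescale_rescale (exp ℂ) x, mul_assoc, ← map_mul,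
    ← bernoulliEGF_add]

theorem sum_phi_eps_eq_bernoulli_general (t : ℝ) (h : ℕ → ℂ) (p : ℕ) :
    ∑ j ∈ range (p + 1),
      ((2 : ℂ) ^ ((1 : ℂ) - ((p - j : ℕ) : ℂ)) - 1) * riemannZeta ((p - j : ℕ) : ℂ)
        * ((1 + (-1 : ℂ) ^ (p - j)) / 2)
        * ∑ ξ ∈ range (j + 1),
            h (j - ξ) * (Complex.I * ((t : ℂ) - (Real.pi : ℂ))) ^ ξ / (Nat.factorial ξ : ℂ)
    = -(1 / 2) * ∑ ξ ∈ range (p + 1),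
        h (p - ξ) * (2 * (Real.pi : ℂ) * Complex.I) ^ ξ / (Nat.factorial ξ : ℂ)
          * Polynomial.aeval ((t : ℂ) / (2 * (Real.pi : ℂ))) (Polynomial.bernoulli ξ) := by
  have hπ : (π : ℂ) ≠ 0 := Complex.ofReal_ne_zero.mpr Real.pi_ne_zero
  have hw : Complex.I * (t - π) = 2 * π * Complex.I * ((t - π) / (2 * π)) := by field_simp
  have hx : (t - π) / (2 * π) + 2⁻¹ = (t / (2 * π) : ℂ) := by field_simp; ring
  set E := rescale (Complex.I * (t - π)) (exp ℂ) with hE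
  have hinner (j : ℕ) : ∑ ξ ∈ range (j + 1),
      h (j - ξ) * (Complex.I * (t - π)) ^ ξ / (ξ.factorial : ℂ) = coeff j (mk h * E) := by
    simp only [E, coeff_mul_eq_sum_range, coeff_mk, coeff_rescale_exp, mul_div_assoc]
  calc _ = ∑ j ∈ range (p + 1), phiEps (p - j) * coeff j (mk h * E) := by
        simp_rw [hinner]; rfl
    _ = coeff p (mk phiEps * (mk h * E)) := by simp [coeff_mul_eq_sum_range]
    _ = coeff p (mk h * (mk phiEps * E)) := by rw [mul_left_comm]
    _ = _ := by
        rw [coeff_mul_eq_sum_range, hE, hw, mk_phiEps_mul_rescale_exp, hx, mul_sum]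
        refine sum_congr rfl fun ξ _ => ?_
        simp only [coeff_mk, coeff_C_mul, coeff_rescale, bernoulliEGF]
        ring

/-- Lemma of Komori–Matsumoto–Tsumura: for t ∈ [0,2π), any function h : ℕ → ℂ
and any p ≥ 1,
Σ_{j=0}^{p} φ(p−j) ε_{p−j} Σ_{ξ=0}^{j} h(j−ξ) (i(t−π))^ξ/ξ!
  = −(1/2) Σ_{ξ=0}^{p} h(p−ξ) (2πi)^ξ/ξ! · B_ξ(t/2π),
where ε_m = (1+(−1)^m)/2 and φ(m) = (2^{1−m}−1)ζ(m). -/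
theorem sum_phi_eps_eq_bernoulli (t : ℝ) (ht0 : 0 ≤ t) (ht : t < 2 * Real.pi)
    (h : ℕ → ℂ) (p : ℕ) (hp : 0 < p) :
    ∑ j ∈ range (p + 1),
      ((2 : ℂ) ^ ((1 : ℂ) - ((p - j : ℕ) : ℂ)) - 1) * riemannZeta ((p - j : ℕ) : ℂ)
        * ((1 + (-1 : ℂ) ^ (p - j)) / 2)
        * ∑ ξ ∈ range (j + 1),
            h (j - ξ) * (Complex.I * ((t : ℂ) - (Real.pi : ℂ))) ^ ξ / (Nat.factorial ξ : ℂ)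
    = -(1 / 2) * ∑ ξ ∈ range (p + 1),
        h (p - ξ) * (2 * (Real.pi : ℂ) * Complex.I) ^ ξ / (Nat.factorial ξ : ℂ)
          * Polynomial.aeval ((t : ℂ) / (2 * (Real.pi : ℂ))) (Polynomial.bernoulli ξ) :=
  sum_phi_eps_eq_bernoulli_general t h p
end

section
/- Σ over integers m,n ≥ 1 with m ≡ n (mod 3) of 1/(m²·n²·(m+n)²) = (187/688905)·π⁶. -/
open Real

namespace Zeta2PU3Aux

noncomputable section

/-- The dominating summable function on ℕ × ℕ. -/
def B (p : ℕ × ℕ) : ℝ := (1 / ((p.1 : ℝ) + 1) ^ 2) * (1 / ((p.2 : ℝ) + 1) ^ 2)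

lemma summable_shift : Summable (fun n : ℕ => 1 / ((n : ℝ) + 1) ^ 2) := by
  have h : Summable (fun n : ℕ => 1 / (n : ℝ) ^ 2) :=
    (Real.summable_one_div_nat_pow).mpr one_lt_two
  have h2 := (summable_nat_add_iff (f := fun n : ℕ => 1 / (n : ℝ) ^ 2) 1).mpr h
  refine h2.congr fun n => ?_
  push_cast
  ring

lemma summable_B : Summable B := by
  have := Summable.mul_of_nonneg summable_shift summable_shift
    (fun n => by positivity) (fun n => by positivity)
  exact this

lemma le_B_aux {x y D : ℝ} (hx : 0 < x) (hy : 0 < y) (hD : x^2*y^2 ≤ D) :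
    1/D ≤ 1/x^2 * (1/y^2) := by
  rw [one_div_mul_one_div]
  exact one_div_le_one_div_of_le (by positivity) hD

lemma one_le_cast_add_one (n : ℕ) : (1 : ℝ) ≤ (n : ℝ) + 1 := by
  have : (0:ℝ) ≤ (n:ℝ) := Nat.cast_nonneg n
  linarith

/-- summands -/
def f222 (p : ℕ × ℕ) : ℝ := if (p.1 + 1) % 3 = (p.2 + 1) % 3 then
      (1 : ℝ) / (((p.1 : ℝ) + 1) ^ 2 * ((p.2 : ℝ) + 1) ^ 2
        * ((p.1 : ℝ) + (p.2 : ℝ) + 2) ^ 2) else 0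

def f33 (p : ℕ × ℕ) : ℝ := if (p.1 + 1) % 3 = (p.2 + 1) % 3 then
      (1 : ℝ) / (((p.1 : ℝ) + 1) ^ 3 * ((p.2 : ℝ) + 1) ^ 3) else 0

def g33 (p : ℕ × ℕ) : ℝ := if (p.1 + p.2 + 2) % 3 = 0 then
      (1 : ℝ) / (((p.1 : ℝ) + 1) ^ 3 * ((p.2 : ℝ) + 1) ^ 3) else 0

def h33 (p : ℕ × ℕ) : ℝ := if (p.1 + 1) % 3 = (p.2 + 1) % 3 then
      (1 : ℝ) / (((p.1 : ℝ) + 1) ^ 3 * ((p.1 : ℝ) + (p.2 : ℝ) + 2) ^ 3) else 0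

def h33' (p : ℕ × ℕ) : ℝ := if (p.1 + 1) % 3 = (p.2 + 1) % 3 then
      (1 : ℝ) / (((p.2 : ℝ) + 1) ^ 3 * ((p.1 : ℝ) + (p.2 : ℝ) + 2) ^ 3) else 0

def A (b : ℕ) : ℝ :=
  (if (b + 1) % 3 = 1 then (1:ℝ) else if (b + 1) % 3 = 2 then -1 else 0) / ((b : ℝ) + 1) ^ 3

lemma summable_of_le_B {f : ℕ × ℕ → ℝ} (h0 : ∀ p, 0 ≤ f p) (h1 : ∀ p, f p ≤ B p) :
    Summable f := Summable.of_nonneg_of_le h0 h1 summable_B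

lemma facts (p : ℕ × ℕ) : (1:ℝ) ≤ (p.1:ℝ)+1 ∧ (1:ℝ) ≤ (p.2:ℝ)+1 ∧
    (2:ℝ) ≤ (p.1:ℝ)+(p.2:ℝ)+2 := by
  refine ⟨one_le_cast_add_one _, one_le_cast_add_one _, ?_⟩
  have h1 : (0:ℝ) ≤ (p.1:ℝ) := Nat.cast_nonneg _
  have h2 : (0:ℝ) ≤ (p.2:ℝ) := Nat.cast_nonneg _
  linarith

lemma summable_f222 : Summable f222 := by
  refine summable_of_le_B (fun p => ?_) (fun p => ?_)
  · unfold f222; split <;> positivity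
  · obtain ⟨hx, hy, hs⟩ := facts p
    unfold f222 B
    split
    · refine le_B_aux (by linarith) (by linarith) ?_
      exact le_mul_of_one_le_right (by positivity) (by nlinarith)
    · positivity

lemma summable_f33 : Summable f33 := by
  refine summable_of_le_B (fun p => ?_) (fun p => ?_)
  · unfold f33; split <;> positivity
  · obtain ⟨hx, hy, hs⟩ := facts p
    unfold f33 B
    split
    · refine le_B_aux (by linarith) (by linarith) ?_
      calc ((p.1:ℝ)+1)^2*((p.2:ℝ)+1)^2 = ((p.1:ℝ)+1)^2*((p.2:ℝ)+1)^2*1 := (mul_one _).symm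
        _ ≤ ((p.1:ℝ)+1)^2*((p.2:ℝ)+1)^2*(((p.1:ℝ)+1)*((p.2:ℝ)+1)) :=
            mul_le_mul_of_nonneg_left (by nlinarith) (by positivity)
        _ = ((p.1:ℝ)+1)^3*((p.2:ℝ)+1)^3 := by ring
    · positivity

lemma summable_g33 : Summable g33 := by
  refine summable_of_le_B (fun p => ?_) (fun p => ?_)
  · unfold g33; split <;> positivity
  · obtain ⟨hx, hy, hs⟩ := facts p
    unfold g33 B
    split
    · refine le_B_aux (by linarith) (by linarith) ?_
      calc ((p.1:ℝ)+1)^2*((p.2:ℝ)+1)^2 = ((p.1:ℝ)+1)^2*((p.2:ℝ)+1)^2*1 := (mul_one _).symm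
        _ ≤ ((p.1:ℝ)+1)^2*((p.2:ℝ)+1)^2*(((p.1:ℝ)+1)*((p.2:ℝ)+1)) :=
            mul_le_mul_of_nonneg_left (by nlinarith) (by positivity)
        _ = ((p.1:ℝ)+1)^3*((p.2:ℝ)+1)^3 := by ring
    · positivity

lemma summable_h33 : Summable h33 := by
  refine summable_of_le_B (fun p => ?_) (fun p => ?_)
  · unfold h33; split <;> positivity
  · obtain ⟨hx, hy, hs⟩ := facts p
    unfold h33 B
    split
    · refine le_B_aux (by linarith) (by linarith) ?_
      have h1 : ((p.1:ℝ)+1)^2 ≤ ((p.1:ℝ)+1)^3 := pow_le_pow_right₀ hx (by norm_num)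
      have h2 : ((p.2:ℝ)+1)^2 ≤ ((p.1:ℝ)+(p.2:ℝ)+2)^2 := by nlinarith
      have h3 : ((p.1:ℝ)+(p.2:ℝ)+2)^2 ≤ ((p.1:ℝ)+(p.2:ℝ)+2)^3 := pow_le_pow_right₀ (by linarith) (by norm_num)
      have := mul_le_mul h1 (h2.trans h3) (by positivity) (by positivity)
      linarith
    · positivity

lemma summable_h33' : Summable h33' := by
  refine summable_of_le_B (fun p => ?_) (fun p => ?_)
  · unfold h33'; split <;> positivity
  · obtain ⟨hx, hy, hs⟩ := facts p
    unfold h33' B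
    split
    · refine le_B_aux (by linarith) (by linarith) ?_
      have h1 : ((p.2:ℝ)+1)^2 ≤ ((p.2:ℝ)+1)^3 := pow_le_pow_right₀ hy (by norm_num)
      have h2 : ((p.1:ℝ)+1)^2 ≤ ((p.1:ℝ)+(p.2:ℝ)+2)^2 := by nlinarith
      have h3 : ((p.1:ℝ)+(p.2:ℝ)+2)^2 ≤ ((p.1:ℝ)+(p.2:ℝ)+2)^3 := pow_le_pow_right₀ (by linarith) (by norm_num)
      have := mul_le_mul h1 (h2.trans h3) (by positivity) (by positivity)
      linarith
    · positivity

lemma tsum_h33'_eq : (∑' p, h33' p) = ∑' p, h33 p := by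
  rw [← (Equiv.prodComm ℕ ℕ).tsum_eq h33]
  refine tsum_congr fun p => ?_
  unfold h33 h33'
  simp only [Equiv.prodComm_apply, Prod.fst_swap, Prod.snd_swap]
  refine if_congr ⟨fun h => h.symm, fun h => h.symm⟩ (by ring_nf) rfl

/-- Step 1: partial fractions. -/
lemma step1 : (∑' p, f33 p) = 3 * (∑' p, f222 p) + 2 * (∑' p, h33 p) := by
  have key : ∀ p, f33 p = 3 * f222 p + (h33 p + h33' p) := by
    intro p
    obtain ⟨hx, hy, hs⟩ := facts p
    unfold f33 f222 h33 h33'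
    split
    · have h2 : ((p.1:ℝ)+(p.2:ℝ)+2) = ((p.1:ℝ)+1) + ((p.2:ℝ)+1) := by ring
      rw [h2]
      field_simp
      ring
    · ring
  calc (∑' p, f33 p) = ∑' p, (3 * f222 p + (h33 p + h33' p)) := tsum_congr key
    _ = (∑' p, 3 * f222 p) + ((∑' p, h33 p) + (∑' p, h33' p)) := by
        rw [Summable.tsum_add (summable_f222.mul_left 3) (summable_h33.add summable_h33'),
          Summable.tsum_add summable_h33 summable_h33']
    _ = 3 * (∑' p, f222 p) + 2 * (∑' p, h33 p) := by
        rw [tsum_mul_left, tsum_h33'_eq]; ring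


def glt (p : ℕ × ℕ) : ℝ := if p.1 < p.2 then g33 p else 0
def ggt (p : ℕ × ℕ) : ℝ := if p.2 < p.1 then g33 p else 0
def gd (p : ℕ × ℕ) : ℝ := if p.1 = p.2 then g33 p else 0

lemma g33_nonneg (p : ℕ × ℕ) : 0 ≤ g33 p := by unfold g33; split <;> positivity

lemma g33_le_B (p : ℕ × ℕ) : g33 p ≤ B p := by
  have h := summable_g33
  obtain ⟨hx, hy, hs⟩ := facts p
  unfold g33 B
  split
  · refine le_B_aux (by linarith) (by linarith) ?_
    calc ((p.1:ℝ)+1)^2*((p.2:ℝ)+1)^2 = ((p.1:ℝ)+1)^2*((p.2:ℝ)+1)^2*1 := (mul_one _).symm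
      _ ≤ ((p.1:ℝ)+1)^2*((p.2:ℝ)+1)^2*(((p.1:ℝ)+1)*((p.2:ℝ)+1)) :=
          mul_le_mul_of_nonneg_left (by nlinarith) (by positivity)
      _ = ((p.1:ℝ)+1)^3*((p.2:ℝ)+1)^3 := by ring
  · positivity

lemma summable_glt : Summable glt := by
  refine summable_of_le_B (fun p => ?_) (fun p => ?_)
  · unfold glt; split
    · exact g33_nonneg p
    · exact le_refl 0
  · unfold glt; split
    · exact g33_le_B p
    · unfold B; positivity

lemma summable_ggt : Summable ggt := by
  refine summable_of_le_B (fun p => ?_) (fun p => ?_)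
  · unfold ggt; split
    · exact g33_nonneg p
    · exact le_refl 0
  · unfold ggt; split
    · exact g33_le_B p
    · unfold B; positivity

lemma summable_gd : Summable gd := by
  refine summable_of_le_B (fun p => ?_) (fun p => ?_)
  · unfold gd; split
    · exact g33_nonneg p
    · exact le_refl 0
  · unfold gd; split
    · exact g33_le_B p
    · unfold B; positivity

lemma tsum_glt : (∑' p, glt p) = ∑' p, h33 p := by
  have inj : Function.Injective (fun q : ℕ × ℕ => ((q.1, q.1 + q.2 + 1) : ℕ × ℕ)) := by
    intro a b h
    simp only [Prod.mk.injEq] at h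
    obtain ⟨h1, h2⟩ := h
    exact Prod.ext h1 (by omega)
  have supp : Function.support glt ⊆ Set.range (fun q : ℕ × ℕ => ((q.1, q.1 + q.2 + 1) : ℕ × ℕ)) := by
    intro p hp
    have hlt : p.1 < p.2 := by
      by_contra hc
      apply hp
      unfold glt
      rw [if_neg hc]
    exact ⟨(p.1, p.2 - p.1 - 1), by ext <;> simp <;> omega⟩
  rw [← inj.tsum_eq supp]
  refine tsum_congr fun q => ?_
  unfold glt g33 h33
  rw [if_pos (by omega : q.1 < q.1 + q.2 + 1)]
  refine if_congr (by omega) ?_ rfl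
  push_cast
  ring_nf

lemma tsum_ggt : (∑' p, ggt p) = ∑' p, h33 p := by
  rw [← tsum_glt, ← (Equiv.prodComm ℕ ℕ).tsum_eq glt]
  refine tsum_congr fun p => ?_
  unfold ggt glt g33
  simp only [Equiv.prodComm_apply, Prod.fst_swap, Prod.snd_swap]
  refine if_congr Iff.rfl ?_ rfl
  refine if_congr (by omega) (by ring_nf) rfl

lemma bern6 : bernoulli 6 = 1/42 := by
  have h5 : bernoulli' 5 = 0 := by
    rw [bernoulli'_def]
    norm_num [Finset.sum_range_succ, bernoulli'_zero, bernoulli'_one, bernoulli'_two,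
      bernoulli'_three, bernoulli'_four, Nat.choose]
  have h6 : bernoulli' 6 = 1/42 := by
    rw [bernoulli'_def]
    norm_num [Finset.sum_range_succ, bernoulli'_zero, bernoulli'_one, bernoulli'_two,
      bernoulli'_three, bernoulli'_four, h5, Nat.choose]
  rw [bernoulli, h6]; norm_num

lemma zeta6 : HasSum (fun n : ℕ => 1 / (n : ℝ) ^ 6) (π ^ 6 / 945) := by
  have h := hasSum_zeta_nat (k := 3) (by norm_num)
  norm_num [bern6, Nat.factorial] at h
  convert h using 1
  · ext n; simp [one_div]
  · ring

lemma zeta6_shift : (∑' n : ℕ, 1 / ((n : ℝ) + 1) ^ 6) = π ^ 6 / 945 := by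
  have h := zeta6
  have := Summable.tsum_eq_zero_add h.summable
  rw [h.tsum_eq] at this
  have h0 : (1 : ℝ) / (0 : ℕ) ^ 6 = 0 := by norm_num
  rw [h0, zero_add] at this
  rw [this]
  exact tsum_congr fun n => by push_cast; ring_nf

lemma tsum_gd : (∑' p, gd p) = (π ^ 6 / 945) / 729 := by
  have injd : Function.Injective (fun a : ℕ => ((a, a) : ℕ × ℕ)) := by
    intro a b h; simpa using congrArg Prod.fst h
  have suppd : Function.support gd ⊆ Set.range (fun a : ℕ => ((a, a) : ℕ × ℕ)) := by
    intro p hp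
    have : p.1 = p.2 := by
      by_contra hc
      apply hp; unfold gd; rw [if_neg hc]
    exact ⟨p.1, by simp [Prod.ext_iff, this]⟩
  rw [← injd.tsum_eq suppd]
  have e1 : ∀ a : ℕ, gd (a, a) = (if a % 3 = 2 then 1 / ((a : ℝ) + 1) ^ 6 else 0) := by
    intro a
    unfold gd g33
    rw [if_pos rfl]
    refine if_congr (by omega) (by push_cast; ring_nf) rfl
  rw [tsum_congr e1]
  have inj3 : Function.Injective (fun k : ℕ => 3 * k + 2) := by
    intro a b h; simp only at h; omega
  have supp3 : Function.support (fun a : ℕ => (if a % 3 = 2 then 1 / ((a : ℝ) + 1) ^ 6 else 0))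
      ⊆ Set.range (fun k : ℕ => 3 * k + 2) := by
    intro a ha
    have h2 : a % 3 = 2 := by
      by_contra hc
      apply ha; show (if a % 3 = 2 then 1 / ((a : ℝ) + 1) ^ 6 else 0) = 0
      rw [if_neg hc]
    exact ⟨a / 3, by show 3 * (a / 3) + 2 = a; omega⟩
  rw [← inj3.tsum_eq supp3]
  have e2 : ∀ k : ℕ, (if (3 * k + 2) % 3 = 2 then 1 / (((3 * k + 2 : ℕ) : ℝ) + 1) ^ 6 else 0)
      = (1 / 729) * (1 / ((k : ℝ) + 1) ^ 6) := by
    intro k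
    rw [if_pos (by omega)]
    push_cast
    rw [show ((3:ℝ) * k + 2 + 1) = 3 * ((k:ℝ) + 1) by ring]
    rw [mul_pow]
    norm_num
    ring_nf
  rw [tsum_congr e2, tsum_mul_left, zeta6_shift]
  ring

/-- Step 2. -/
lemma step2 : (∑' p, g33 p) = 2 * (∑' p, h33 p) + (π ^ 6 / 945) / 729 := by
  have key : ∀ p, g33 p = glt p + ggt p + gd p := by
    intro p
    unfold glt ggt gd
    rcases lt_trichotomy p.1 p.2 with h | h | h
    · rw [if_pos h, if_neg (by omega), if_neg (by omega)]; ring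
    · rw [if_neg (by omega), if_neg (by omega), if_pos h]; ring
    · rw [if_neg (by omega), if_pos h, if_neg (by omega)]; ring
  calc (∑' p, g33 p) = ∑' p, (glt p + ggt p + gd p) := tsum_congr key
    _ = ((∑' p, glt p) + (∑' p, ggt p)) + (∑' p, gd p) := by
        rw [Summable.tsum_add (summable_glt.add summable_ggt) summable_gd,
          Summable.tsum_add summable_glt summable_ggt]
    _ = 2 * (∑' p, h33 p) + (π ^ 6 / 945) / 729 := by
        rw [tsum_glt, tsum_ggt, tsum_gd]; ring


lemma summable_A_abs : Summable (fun b : ℕ => |A b|) := by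
  refine Summable.of_nonneg_of_le (fun b => abs_nonneg _) (fun b => ?_) summable_shift
  unfold A
  rw [abs_div, abs_of_nonneg (by positivity : (0:ℝ) ≤ ((b:ℝ)+1)^3)]
  have hb : (1:ℝ) ≤ (b:ℝ) + 1 := one_le_cast_add_one b
  have h1 : |if (b + 1) % 3 = 1 then (1:ℝ) else if (b + 1) % 3 = 2 then -1 else 0| ≤ 1 := by
    split_ifs <;> norm_num
  calc |if (b + 1) % 3 = 1 then (1:ℝ) else if (b + 1) % 3 = 2 then -1 else 0| / ((b:ℝ)+1)^3
      ≤ 1 / ((b:ℝ)+1)^3 := by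
        apply div_le_div_of_nonneg_right h1 (by positivity) |>.trans_eq rfl
    _ ≤ 1 / ((b:ℝ)+1)^2 :=
        one_div_le_one_div_of_le (by positivity) (pow_le_pow_right₀ hb (by norm_num))

lemma summable_A : Summable A := summable_A_abs.of_abs

lemma summable_Aprod : Summable (fun p : ℕ × ℕ => A p.1 * A p.2) := by
  have h := Summable.mul_of_nonneg summable_A_abs summable_A_abs
    (fun b => abs_nonneg _) (fun b => abs_nonneg _)
  exact Summable.of_abs (h.congr fun p => (abs_mul _ _).symm)

lemma key3 : ∀ p : ℕ × ℕ, f33 p = g33 p + A p.1 * A p.2 := by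
  intro p
  unfold f33 g33 A
  have h1 : (p.1+1)%3 = 0 ∨ (p.1+1)%3 = 1 ∨ (p.1+1)%3 = 2 := by omega
  have h2 : (p.2+1)%3 = 0 ∨ (p.2+1)%3 = 1 ∨ (p.2+1)%3 = 2 := by omega
  rcases h1 with h1|h1|h1 <;> rcases h2 with h2|h2|h2 <;>
    simp only [h1, h2] <;>
    (first
      | rw [if_pos (show (p.1+p.2+2)%3 = 0 by omega)]
      | rw [if_neg (show ¬(p.1+p.2+2)%3 = 0 by omega)]) <;>
    norm_num <;> ring

/-- Step 3. -/
lemma step3 : (∑' p, f33 p) = (∑' p, g33 p) + (∑' b, A b) ^ 2 := by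
  calc (∑' p, f33 p) = ∑' p, (g33 p + A p.1 * A p.2) := tsum_congr key3
    _ = (∑' p, g33 p) + ∑' p : ℕ × ℕ, A p.1 * A p.2 := Summable.tsum_add summable_g33 summable_Aprod
    _ = (∑' p, g33 p) + (∑' b, A b) ^ 2 := by
        rw [← tsum_mul_tsum_of_summable_norm
          (by simpa [Real.norm_eq_abs] using summable_A_abs)
          (by simpa [Real.norm_eq_abs] using summable_A_abs)]
        ring

lemma Lsin : HasSum (fun n : ℕ => 1 / (n : ℝ) ^ 3 * Real.sin (2 * π * n * (1/3)))
    (2 * π ^ 3 / 81) := by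
  have h := hasSum_one_div_nat_pow_mul_sin (k := 1) (by norm_num)
    (x := 1/3) (by norm_num)
  have hb : bernoulli 3 = 0 := by
    rw [bernoulli]; norm_num [bernoulli'_three]
  have hb2 : bernoulli 2 = 1/6 := by
    rw [bernoulli_eq_bernoulli'_of_ne_one (by norm_num), bernoulli'_two]
  have he : (Polynomial.map (algebraMap ℚ ℝ) (Polynomial.bernoulli 3)).eval (1/3 : ℝ) = 1/27 := by
    simp [Polynomial.bernoulli, Finset.sum_range_succ, bernoulli_zero, bernoulli_one,
      hb2, hb, Nat.choose]
    norm_num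
  norm_num [he, Nat.factorial] at h
  convert h using 1
  · ext n; ring_nf
  · ring

lemma sinval (m : ℕ) : Real.sin (2 * π * m * (1/3))
    = (if m % 3 = 1 then (1:ℝ) else if m % 3 = 2 then -1 else 0) * (√3 / 2) := by
  obtain ⟨q, r, hr, rfl⟩ : ∃ q r, r < 3 ∧ m = 3 * q + r := ⟨m / 3, m % 3, by omega, by omega⟩
  have hmod : (3 * q + r) % 3 = r := by omega
  rw [hmod]
  have key : 2 * π * ((3 * q + r : ℕ) : ℝ) * (1/3) = 2 * π * (r : ℝ) * (1/3) + (q : ℝ) * (2 * π) := by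
    push_cast; ring
  rw [key, Real.sin_add_nat_mul_two_pi]
  interval_cases r
  · simp
  · rw [if_pos rfl, show 2 * π * ((1:ℕ):ℝ) * (1/3) = π - π/3 by push_cast; ring,
      Real.sin_pi_sub, Real.sin_pi_div_three]
    norm_num
  · rw [if_neg (by norm_num), if_pos rfl,
      show 2 * π * ((2:ℕ):ℝ) * (1/3) = π - (-(π/3)) by push_cast; ring,
      Real.sin_pi_sub, Real.sin_neg, Real.sin_pi_div_three]
    ring

lemma tsum_A : (∑' b, A b) = 2 * π ^ 3 / 81 * (2 / √3) := by
  have hs := Lsin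
  have hshift := Summable.tsum_eq_zero_add hs.summable
  rw [hs.tsum_eq] at hshift
  have h0 : 1 / ((0:ℕ) : ℝ) ^ 3 * Real.sin (2 * π * (0:ℕ) * (1/3)) = 0 := by norm_num
  rw [h0, zero_add] at hshift
  have key : ∀ n : ℕ, 1 / (((n+1 : ℕ)) : ℝ) ^ 3 * Real.sin (2 * π * ((n+1 : ℕ)) * (1/3))
      = (√3 / 2) * A n := by
    intro n
    rw [sinval (n+1)]
    unfold A
    push_cast
    ring
  rw [tsum_congr key, tsum_mul_left] at hshift
  have hsqrt : (0:ℝ) < √3 := Real.sqrt_pos.mpr (by norm_num)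
  have h32 : (√3 / 2 : ℝ) ≠ 0 := by positivity
  field_simp at hshift ⊢
  nlinarith [hshift, Real.sq_sqrt (show (0:ℝ) ≤ 3 by norm_num), hsqrt]

lemma tsum_A_sq : (∑' b, A b) ^ 2 = 16 * π ^ 6 / 19683 := by
  rw [tsum_A]
  have h3 : (√3:ℝ) ^ 2 = 3 := Real.sq_sqrt (by norm_num)
  have : ((2 * π ^ 3 / 81) * (2 / √3)) ^ 2 = (2 * π ^ 3 / 81) ^ 2 * (2 ^ 2 / (√3) ^ 2) := by
    ring
  rw [this, h3]
  ring

end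

end Zeta2PU3Aux

open Zeta2PU3Aux in
/-- The value ζ₂PU3(2,2,2) of the zeta-function of the weight lattice of PU(3):
the sum over m,n ≥ 1 with m ≡ n (mod 3) of 1/(m²n²(m+n)²) equals (187/688905)π⁶. -/
theorem zeta2_PU3_two_two_two :
    (∑' pr : ℕ × ℕ, (if (pr.1 + 1) % 3 = (pr.2 + 1) % 3 then
      (1 : ℝ) / (((pr.1 : ℝ) + 1) ^ 2 * ((pr.2 : ℝ) + 1) ^ 2
        * ((pr.1 : ℝ) + (pr.2 : ℝ) + 2) ^ 2) else 0))
    = 187 / 688905 * Real.pi ^ 6 := by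
  have hrw : (∑' pr : ℕ × ℕ, (if (pr.1 + 1) % 3 = (pr.2 + 1) % 3 then
      (1 : ℝ) / (((pr.1 : ℝ) + 1) ^ 2 * ((pr.2 : ℝ) + 1) ^ 2
        * ((pr.1 : ℝ) + (pr.2 : ℝ) + 2) ^ 2) else 0)) = ∑' p, f222 p :=
    tsum_congr fun p => by unfold f222; rfl
  rw [hrw]
  have e1 := step1
  have e2 := step2
  have e3 := step3
  rw [tsum_A_sq] at e3
  -- 3 S + 2 H = (2 H + z/729) + 16π⁶/19683  ⇒  S = 187/688905 π⁶
  have : 3 * (∑' p, f222 p) = 16 * Real.pi ^ 6 / 19683 + (Real.pi ^ 6 / 945) / 729 := by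
    linarith [e1, e2, e3]
  linarith [this]
end

section
/- Σ over integers m,n ≥ 1 with m ≡ n (mod 3) of 1/(m⁶·n⁶·(m+n)⁶) = (53109402098/3020275543157103456225)·π¹⁸. -/
/-!
Put `aₙ = n⁻⁶` (so `a₀ = 0`) and `F x = ∑ aₙ cos 2πnx`, which equals `(2π)⁶/1440 · B₆(x)` on
`[0, 1]` and is `1`-periodic. Expanding `∫₀¹ F(x+s₁) F(x+s₂) F(x+s₃) dx` into a triple series,
orthogonality of the cosines keeps only the triples in which one index is the sum of the other two.
For the shifts `(0, 0, 0)` and `(0, 1/3, 2/3)` this yields `3/4 ∑ a_u a_v a_{u+v}` and the same sum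
twisted by `cos(2π(u - v)/3)`, and `𝟙[u ≡ v mod 3] = (1 + 2 cos(2π(u - v)/3))/3` combines the two
into the wanted sum. The integrand of the shifted integral has period `1/3`, and on `[0, 1/3]` all
three arguments stay in `[0, 1]`, so both integrals are integrals of explicit polynomials.
-/

open Real Function intervalIntegral

lemma abs_mul_cos_le (c θ : ℝ) : |c * cos θ| ≤ |c| := by
  rw [abs_mul]
  exact mul_le_of_le_one_right (abs_nonneg c) (abs_cos_le_one θ)

lemma cos_mul_cos_mul_cos (A B C : ℝ) :
    cos A * cos B * cos C =
      (cos (A + B + C) + cos (A + B - C) + cos (A - B + C) + cos (A - B - C)) / 4 := by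
  simp only [cos_add, cos_sub, sin_add, sin_sub]
  ring

lemma integral_cos_two_pi_int_mul_add (k : ℤ) (φ : ℝ) :
    ∫ x in (0 : ℝ)..1, cos (2 * π * k * x + φ) = if k = 0 then cos φ else 0 := by
  split_ifs with hk
  · simp [hk]
  · have hc : 2 * π * k ≠ 0 := by simp [pi_ne_zero, hk]
    rw [integral_comp_mul_add (f := cos) hc, integral_cos, mul_one, mul_zero, zero_add,
      show 2 * π * k + φ = φ + k * (2 * π) by ring, sin_add_int_mul_two_pi, sub_self, smul_zero]

lemma integral_cos_mul_cos_mul_cos (m n p : ℤ) (s₁ s₂ s₃ : ℝ) :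
    ∫ x in (0 : ℝ)..1, cos (2 * π * m * (x + s₁)) * cos (2 * π * n * (x + s₂)) *
        cos (2 * π * p * (x + s₃)) =
      ((if m + n + p = 0 then cos (2 * π * (m * s₁ + n * s₂ + p * s₃)) else 0) +
        (if m + n - p = 0 then cos (2 * π * (m * s₁ + n * s₂ - p * s₃)) else 0) +
        (if m - n + p = 0 then cos (2 * π * (m * s₁ - n * s₂ + p * s₃)) else 0) +
        (if m - n - p = 0 then cos (2 * π * (m * s₁ - n * s₂ - p * s₃)) else 0)) / 4 := by
  have expand : ∀ x : ℝ, cos (2 * π * m * (x + s₁)) * cos (2 * π * n * (x + s₂)) *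
        cos (2 * π * p * (x + s₃)) =
      (cos (2 * π * ((m + n + p : ℤ) : ℝ) * x + 2 * π * (m * s₁ + n * s₂ + p * s₃)) +
        cos (2 * π * ((m + n - p : ℤ) : ℝ) * x + 2 * π * (m * s₁ + n * s₂ - p * s₃)) +
        cos (2 * π * ((m - n + p : ℤ) : ℝ) * x + 2 * π * (m * s₁ - n * s₂ + p * s₃)) +
        cos (2 * π * ((m - n - p : ℤ) : ℝ) * x + 2 * π * (m * s₁ - n * s₂ - p * s₃))) / 4 := by
    intro x
    rw [cos_mul_cos_mul_cos]
    push_cast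
    ring_nf
  simp (disch := exact Continuous.intervalIntegrable (by fun_prop) _ _) only
    [expand, integral_div, integral_add, integral_cos_two_pi_int_mul_add]

lemma tsum_mul_tsum_mul_tsum_of_summable_norm {R ι : Type*} [NormedRing R] [CompleteSpace R]
    {f g h : ι → R} (hf : Summable fun i => ‖f i‖) (hg : Summable fun i => ‖g i‖)
    (hh : Summable fun i => ‖h i‖) :
    (∑' i, f i) * (∑' j, g j) * (∑' k, h k) = ∑' q : ι × ι × ι, f q.1 * g q.2.1 * h q.2.2 := by
  rw [mul_assoc, tsum_mul_tsum_of_summable_norm hg hh,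
    tsum_mul_tsum_of_summable_norm hf (hg.mul_norm hh)]
  simp only [mul_assoc]

lemma tsum_ite_eq_tsum_comp {α β γ : Type*} [AddCommMonoid α] [TopologicalSpace α] {e : β → γ}
    (he : Injective e) {P : γ → Prop} [DecidablePred P] (hP : ∀ c, P c ↔ c ∈ Set.range e)
    (f : γ → α) : ∑' c, (if P c then f c else 0) = ∑' b, f (e b) := by
  rw [← he.tsum_eq (f := fun c => if P c then f c else 0)]
  · exact tsum_congr fun b => if_pos ((hP _).2 ⟨b, rfl⟩)
  · intro c hc
    by_contra h
    exact hc (if_neg (mt (hP c).1 h))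

lemma tsum_comp_add_one_prod_add_one {α : Type*} [AddCommMonoid α] [TopologicalSpace α]
    {f : ℕ × ℕ → α} (h₁ : ∀ n, f (0, n) = 0) (h₂ : ∀ m, f (m, 0) = 0) :
    ∑' q : ℕ × ℕ, f (q.1 + 1, q.2 + 1) = ∑' q, f q := by
  refine Injective.tsum_eq (g := fun q : ℕ × ℕ => (q.1 + 1, q.2 + 1))
    ((add_left_injective 1).prodMap (add_left_injective 1)) fun q hq => ?_
  obtain ⟨_ | m, _ | n⟩ := q
  · exact absurd (h₁ 0) hq
  · exact absurd (h₁ _) hq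
  · exact absurd (h₂ _) hq
  · exact ⟨(m, n), rfl⟩

lemma cos_two_pi_int_div_three (k : ℤ) : cos (2 * π * k / 3) = if k % 3 = 0 then 1 else -1 / 2 := by
  have hk : (k : ℝ) = (k % 3 : ℤ) + (k / 3 : ℤ) * 3 := by
    exact_mod_cast (by omega : k = k % 3 + k / 3 * 3)
  rw [hk, show 2 * π * (((k % 3 : ℤ) : ℝ) + (k / 3 : ℤ) * 3) / 3 =
    2 * π * (k % 3 : ℤ) / 3 + (k / 3 : ℤ) * (2 * π) by ring, cos_add_int_mul_two_pi]
  rcases (by omega : k % 3 = 0 ∨ k % 3 = 1 ∨ k % 3 = 2) with h | h | h <;> simp only [h]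
  · simp
  · rw [show 2 * π * ((1 : ℤ) : ℝ) / 3 = π - π / 3 by push_cast; ring, cos_pi_sub, cos_pi_div_three]
    norm_num
  · rw [show 2 * π * ((2 : ℤ) : ℝ) / 3 = π / 3 + π by push_cast; ring, cos_add_pi, cos_pi_div_three]
    norm_num

lemma tsum_ite_mod_three_eq {b : ℕ × ℕ → ℝ} (hb : Summable b) :
    ∑' q : ℕ × ℕ, (if q.1 % 3 = q.2 % 3 then b q else 0) =
      (∑' q, b q + 2 * ∑' q : ℕ × ℕ, b q * cos (2 * π * (q.1 - q.2) / 3)) / 3 := by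
  have hcos : Summable fun q : ℕ × ℕ => b q * cos (2 * π * (q.1 - q.2) / 3) :=
    hb.abs.of_norm_bounded fun q => abs_mul_cos_le _ _
  have hpt : ∀ q : ℕ × ℕ, (if q.1 % 3 = q.2 % 3 then b q else 0) =
      (b q + 2 * (b q * cos (2 * π * (q.1 - q.2) / 3))) / 3 := fun q => by
    have := cos_two_pi_int_div_three (q.1 - q.2)
    push_cast at this
    rw [this]
    simp only [show ((q.1 : ℤ) - q.2) % 3 = 0 ↔ q.1 % 3 = q.2 % 3 by omega]
    split_ifs <;> ring
  rw [tsum_congr hpt, tsum_div_const, hb.tsum_add (hcos.mul_left 2), tsum_mul_left]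

lemma integral_mul_shift_third_eq {F : ℝ → ℝ} (hF : Periodic F 1) (hc : Continuous F) :
    ∫ x in (0 : ℝ)..1, F x * F (x + 1 / 3) * F (x + 2 / 3) =
      3 * ∫ x in (0 : ℝ)..1 / 3, F x * F (x + 1 / 3) * F (x + 2 / 3) := by
  have hG : Periodic (fun x => F x * F (x + 1 / 3) * F (x + 2 / 3)) (1 / 3) := fun x => by
    dsimp only
    rw [show x + 1 / 3 + 2 / 3 = x + 1 by ring, hF, show x + 1 / 3 + 1 / 3 = x + 2 / 3 by ring]
    ring
  have h := hG.intervalIntegral_add_zsmul_eq 3 0 fun _ _ =>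
    (by fun_prop : Continuous _).intervalIntegrable _ _
  norm_num at h
  exact h

noncomputable def cosSeries (a : ℕ → ℝ) (x : ℝ) : ℝ := ∑' n : ℕ, a n * cos (2 * π * n * x)

lemma cosSeries_periodic (a : ℕ → ℝ) : Periodic (cosSeries a) 1 := fun x => by
  refine tsum_congr fun n => ?_
  rw [show 2 * π * n * (x + 1) = 2 * π * n * x + n * (2 * π) by ring, cos_add_nat_mul_two_pi]

lemma continuous_cosSeries {a : ℕ → ℝ} (ha : Summable a) : Continuous (cosSeries a) :=
  continuous_tsum (fun n => by fun_prop) ha.abs fun n x => abs_mul_cos_le _ _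

section CosSeries

variable {a : ℕ → ℝ}

lemma summable_abs_mul_mul (ha : Summable a) :
    Summable fun q : ℕ × ℕ × ℕ => |a q.1 * a q.2.1 * a q.2.2| := by
  have han : Summable fun n => ‖a n‖ := summable_norm_iff.mpr ha
  refine (han.mul_norm (han.mul_norm han)).congr fun q => ?_
  simp only [Real.norm_eq_abs, abs_mul, mul_assoc]

lemma integral_cosSeries_mul_mul_eq_tsum (ha : Summable a) (s₁ s₂ s₃ : ℝ) :
    ∫ x in (0 : ℝ)..1, cosSeries a (x + s₁) * cosSeries a (x + s₂) * cosSeries a (x + s₃) =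
      ∑' q : ℕ × ℕ × ℕ, a q.1 * a q.2.1 * a q.2.2 *
        ∫ x in (0 : ℝ)..1, cos (2 * π * q.1 * (x + s₁)) * cos (2 * π * q.2.1 * (x + s₂)) *
          cos (2 * π * q.2.2 * (x + s₃)) := by
  let term : ℕ × ℕ × ℕ → ℝ → ℝ := fun q x => a q.1 * a q.2.1 * a q.2.2 *
    (cos (2 * π * q.1 * (x + s₁)) * cos (2 * π * q.2.1 * (x + s₂)) * cos (2 * π * q.2.2 * (x + s₃)))
  have hbound : ∀ q x, ‖term q x‖ ≤ |a q.1 * a q.2.1 * a q.2.2| := fun q x => by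
    simp only [term, Real.norm_eq_abs, abs_mul]
    refine mul_le_of_le_one_right (by positivity) ?_
    exact mul_le_one₀ (mul_le_one₀ (abs_cos_le_one _) (abs_nonneg _) (abs_cos_le_one _))
      (abs_nonneg _) (abs_cos_le_one _)
  have hsummable : ∀ x, Summable fun n : ℕ => ‖a n * cos (2 * π * n * x)‖ := fun x =>
    ha.abs.of_nonneg_of_le (fun _ => norm_nonneg _) fun n => abs_mul_cos_le _ _
  have hprod : ∀ x, cosSeries a (x + s₁) * cosSeries a (x + s₂) * cosSeries a (x + s₃) =
      ∑' q, term q x := fun x => by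
    rw [cosSeries, cosSeries, cosSeries,
      tsum_mul_tsum_mul_tsum_of_summable_norm (hsummable _) (hsummable _) (hsummable _)]
    exact tsum_congr fun q => by ring
  simp only [hprod]
  have hcont : ∀ q, Continuous (term q) := fun q => by fun_prop
  have hsum : HasSum (fun q => ∫ x in (0 : ℝ)..1, term q x) (∫ x in (0 : ℝ)..1, ∑' q, term q x) :=
    intervalIntegral.hasSum_integral_of_dominated_convergence
      (fun q _ => |a q.1 * a q.2.1 * a q.2.2|) (fun q => (hcont q).aestronglyMeasurable)
      (fun q => .of_forall fun x _ => hbound q x) (.of_forall fun _ _ => summable_abs_mul_mul ha)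
      intervalIntegrable_const
      (.of_forall fun x _ => ((summable_abs_mul_mul ha).of_norm_bounded (hbound · x)).hasSum)
  rw [← hsum.tsum_eq]
  exact tsum_congr fun q => integral_const_mul _ _

lemma mul_integral_cos_mul_cos_mul_cos (ha0 : a 0 = 0) (m n p : ℕ) (s₁ s₂ s₃ : ℝ) :
    a m * a n * a p * ∫ x in (0 : ℝ)..1, cos (2 * π * m * (x + s₁)) * cos (2 * π * n * (x + s₂)) *
        cos (2 * π * p * (x + s₃)) =
      ((if p = m + n then a m * a n * a p * cos (2 * π * (m * s₁ + n * s₂ - p * s₃)) else 0) +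
        (if n = m + p then a m * a n * a p * cos (2 * π * (m * s₁ - n * s₂ + p * s₃)) else 0) +
        (if m = n + p then a m * a n * a p * cos (2 * π * (m * s₁ - n * s₂ - p * s₃)) else 0)) /
        4 := by
  have h := integral_cos_mul_cos_mul_cos m n p s₁ s₂ s₃
  push_cast at h
  rw [h]
  -- the resonance `m + n + p = 0` only occurs at `m = n = p = 0`, where `a 0 = 0`
  rcases eq_or_ne m 0 with rfl | hm
  · simp [ha0]
  rw [if_neg (by omega : ¬((m : ℤ) + n + p = 0))]
  simp only [show ((m : ℤ) + n - p = 0 ↔ p = m + n) by omega,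
    show ((m : ℤ) - n + p = 0 ↔ n = m + p) by omega,
    show ((m : ℤ) - n - p = 0 ↔ m = n + p) by omega]
  split_ifs <;> ring

lemma integral_cosSeries_mul_mul (ha : Summable a) (ha0 : a 0 = 0) (s₁ s₂ s₃ : ℝ) :
    ∫ x in (0 : ℝ)..1, cosSeries a (x + s₁) * cosSeries a (x + s₂) * cosSeries a (x + s₃) =
      (∑' q : ℕ × ℕ, a q.1 * a q.2 * a (q.1 + q.2) *
          cos (2 * π * (q.1 * (s₁ - s₃) + q.2 * (s₂ - s₃))) +
        ∑' q : ℕ × ℕ, a q.1 * a q.2 * a (q.1 + q.2) *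
          cos (2 * π * (q.1 * (s₁ - s₂) + q.2 * (s₃ - s₂))) +
        ∑' q : ℕ × ℕ, a q.1 * a q.2 * a (q.1 + q.2) *
          cos (2 * π * (q.1 * (s₁ - s₂) + q.2 * (s₁ - s₃)))) / 4 := by
  have hsummable : ∀ (P : ℕ × ℕ × ℕ → Prop) [DecidablePred P] (θ : ℕ × ℕ × ℕ → ℝ),
      Summable fun q => if P q then a q.1 * a q.2.1 * a q.2.2 * cos (θ q) else 0 := by
    intro P _ θ
    refine (summable_abs_mul_mul ha).of_norm_bounded fun q => ?_
    split_ifs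
    · exact abs_mul_cos_le _ _
    · simp only [norm_zero]
      positivity
  simp only [integral_cosSeries_mul_mul_eq_tsum ha, mul_integral_cos_mul_cos_mul_cos ha0]
  rw [tsum_div_const,
    Summable.tsum_add ((hsummable _ _).add (hsummable _ _)) (hsummable _ _),
    Summable.tsum_add (hsummable _ _) (hsummable _ _),
    tsum_ite_eq_tsum_comp (e := fun q : ℕ × ℕ => (q.1, q.2, q.1 + q.2))
      (fun x y h => by simp only [Prod.mk.injEq] at h; exact Prod.ext h.1 h.2.1)
      (by rintro ⟨m, n, p⟩
          exact ⟨by rintro (rfl : p = m + n); exact ⟨(m, n), rfl⟩, by rintro ⟨⟨u, v⟩, ⟨⟩⟩; rfl⟩),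
    tsum_ite_eq_tsum_comp (e := fun q : ℕ × ℕ => (q.1, q.1 + q.2, q.2))
      (fun x y h => by simp only [Prod.mk.injEq] at h; exact Prod.ext h.1 h.2.2)
      (by rintro ⟨m, n, p⟩
          exact ⟨by rintro (rfl : n = m + p); exact ⟨(m, p), rfl⟩, by rintro ⟨⟨u, v⟩, ⟨⟩⟩; rfl⟩),
    tsum_ite_eq_tsum_comp (e := fun q : ℕ × ℕ => (q.1 + q.2, q.1, q.2))
      (fun x y h => by simp only [Prod.mk.injEq] at h; exact Prod.ext h.2.1 h.2.2)
      (by rintro ⟨m, n, p⟩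
          exact ⟨by rintro (rfl : m = n + p); exact ⟨(n, p), rfl⟩, by rintro ⟨⟨u, v⟩, ⟨⟩⟩; rfl⟩)]
  congr 2
  · congr 1 <;> exact tsum_congr fun q => by push_cast; ring_nf
  · exact tsum_congr fun q => by push_cast; ring_nf

lemma integral_cosSeries_cube (ha : Summable a) (ha0 : a 0 = 0) :
    ∫ x in (0 : ℝ)..1, cosSeries a x ^ 3 =
      3 / 4 * ∑' q : ℕ × ℕ, a q.1 * a q.2 * a (q.1 + q.2) := by
  have h := integral_cosSeries_mul_mul ha ha0 0 0 0
  simp only [add_zero, sub_self, mul_zero, cos_zero, mul_one, ← pow_three'] at h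
  rw [h]
  ring

lemma integral_cosSeries_mul_shift_third (ha : Summable a) (ha0 : a 0 = 0) :
    ∫ x in (0 : ℝ)..1, cosSeries a x * cosSeries a (x + 1 / 3) * cosSeries a (x + 2 / 3) =
      3 / 4 * ∑' q : ℕ × ℕ, a q.1 * a q.2 * a (q.1 + q.2) * cos (2 * π * (q.1 - q.2) / 3) := by
  have h := integral_cosSeries_mul_mul ha ha0 0 (1 / 3) (2 / 3)
  have h₁ : ∀ u v : ℕ, cos (2 * π * (u * (0 - 2 / 3) + v * (1 / 3 - 2 / 3))) =
      cos (2 * π * (u - v) / 3) := fun u v => by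
    rw [show 2 * π * (u * (0 - 2 / 3) + v * (1 / 3 - 2 / 3)) =
      2 * π * (u - v) / 3 - u * (2 * π) by ring, cos_sub_nat_mul_two_pi]
  have h₂ : ∀ u v : ℕ, cos (2 * π * (u * (0 - 1 / 3) + v * (2 / 3 - 1 / 3))) =
      cos (2 * π * (u - v) / 3) := fun u v => by
    rw [show 2 * π * (u * (0 - 1 / 3) + v * (2 / 3 - 1 / 3)) = -(2 * π * (u - v) / 3) by ring,
      cos_neg]
  have h₃ : ∀ u v : ℕ, cos (2 * π * (u * (0 - 1 / 3) + v * (0 - 2 / 3))) =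
      cos (2 * π * (u - v) / 3) := fun u v => by
    rw [show 2 * π * (u * (0 - 1 / 3) + v * (0 - 2 / 3)) =
      -(2 * π * (u - v) / 3) - v * (2 * π) by ring, cos_sub_nat_mul_two_pi, cos_neg]
  simp only [add_zero, h₁, h₂, h₃] at h
  rw [h]
  ring

theorem tsum_ite_mod_three_eq_integral (ha : Summable a) (ha0 : a 0 = 0) :
    ∑' q : ℕ × ℕ, (if q.1 % 3 = q.2 % 3 then a q.1 * a q.2 * a (q.1 + q.2) else 0) =
      4 / 9 * ((∫ x in (0 : ℝ)..1, cosSeries a x ^ 3) +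
        2 * ∫ x in (0 : ℝ)..1,
          cosSeries a x * cosSeries a (x + 1 / 3) * cosSeries a (x + 2 / 3)) := by
  have hb : Summable fun q : ℕ × ℕ => a q.1 * a q.2 * a (q.1 + q.2) := by
    refine Summable.of_abs ((summable_abs_mul_mul ha).comp_injective
      (i := fun q : ℕ × ℕ => (q.1, q.2, q.1 + q.2)) ?_)
    intro x y h
    simp only [Prod.mk.injEq] at h
    exact Prod.ext h.1 h.2.1
  rw [tsum_ite_mod_three_eq hb, integral_cosSeries_cube ha ha0,
    integral_cosSeries_mul_shift_third ha ha0]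
  ring

end CosSeries

lemma bernoulli'_five : bernoulli' 5 = 0 := by
  rw [bernoulli'_def]
  norm_num [Finset.sum_range_succ, bernoulli'_three, bernoulli'_four, Nat.choose]

lemma bernoulli'_six : bernoulli' 6 = 1 / 42 := by
  rw [bernoulli'_def]
  norm_num [Finset.sum_range_succ, bernoulli'_three, bernoulli'_four, bernoulli'_five, Nat.choose]

lemma bernoulliFun_six (x : ℝ) :
    bernoulliFun 6 x = x ^ 6 - 3 * x ^ 5 + 5 / 2 * x ^ 4 - 1 / 2 * x ^ 2 + 1 / 42 := by
  simp [bernoulliFun, Polynomial.bernoulli_def, Finset.sum_range_succ,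
    bernoulli_eq_bernoulli'_of_ne_one, bernoulli'_three, bernoulli'_four, bernoulli'_five,
    bernoulli'_six, Nat.choose]
  ring

lemma integral_bernoulliFun_six_cube :
    ∫ x in (0 : ℝ)..1, bernoulliFun 6 x ^ 3 = 1031 / 6844101264 := by
  simp only [bernoulliFun_six]
  ring_nf
  simp (disch := exact Continuous.intervalIntegrable (by fun_prop) _ _) only
    [integral_add, integral_sub, integral_mul_const, integral_pow, integral_const]
  norm_num

lemma integral_bernoulliFun_six_mul_shift_third :
    ∫ x in (0 : ℝ)..1 / 3,
        bernoulliFun 6 x * bernoulliFun 6 (x + 1 / 3) * bernoulliFun 6 (x + 2 / 3) =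
      44196167947 / 883848352821466032 := by
  simp only [bernoulliFun_six]
  ring_nf
  simp (disch := exact Continuous.intervalIntegrable (by fun_prop) _ _) only
    [integral_add, integral_sub, integral_mul_const, integral_pow, integral_const]
  norm_num

lemma cosSeries_one_div_pow_six {x : ℝ} (hx : x ∈ Set.Icc (0 : ℝ) 1) :
    cosSeries (fun n => 1 / (n : ℝ) ^ 6) x = (2 * π) ^ 6 / 1440 * bernoulliFun 6 x := by
  have h := (hasSum_one_div_nat_pow_mul_cos (k := 3) (by norm_num) hx).tsum_eq
  simp only [Nat.reduceMul] at h
  rw [cosSeries, h, bernoulliFun]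
  congr 1
  norm_num [Nat.factorial]
  ring

lemma integral_cosSeries_one_div_pow_six_cube :
    ∫ x in (0 : ℝ)..1, cosSeries (fun n => 1 / (n : ℝ) ^ 6) x ^ 3 =
      ((2 * π) ^ 6 / 1440) ^ 3 * (1031 / 6844101264) := by
  rw [← integral_bernoulliFun_six_cube, ← integral_const_mul]
  refine integral_congr fun x hx => ?_
  rw [Set.uIcc_of_le zero_le_one] at hx
  rw [cosSeries_one_div_pow_six hx]
  ring

lemma integral_cosSeries_one_div_pow_six_mul_shift_third :
    ∫ x in (0 : ℝ)..1, cosSeries (fun n => 1 / (n : ℝ) ^ 6) x *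
        cosSeries (fun n => 1 / (n : ℝ) ^ 6) (x + 1 / 3) *
        cosSeries (fun n => 1 / (n : ℝ) ^ 6) (x + 2 / 3) =
      3 * (((2 * π) ^ 6 / 1440) ^ 3 * (44196167947 / 883848352821466032)) := by
  have ha : Summable fun n : ℕ => 1 / (n : ℝ) ^ 6 := summable_one_div_nat_pow.2 (by norm_num)
  rw [integral_mul_shift_third_eq (cosSeries_periodic _) (continuous_cosSeries ha),
    ← integral_bernoulliFun_six_mul_shift_third, ← integral_const_mul (((2 * π) ^ 6 / 1440) ^ 3)]
  congr 1
  refine integral_congr fun x hx => ?_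
  rw [Set.uIcc_of_le (by norm_num)] at hx
  rw [cosSeries_one_div_pow_six ⟨hx.1, by linarith [hx.2]⟩,
    cosSeries_one_div_pow_six ⟨by linarith [hx.1], by linarith [hx.2]⟩,
    cosSeries_one_div_pow_six ⟨by linarith [hx.1], by linarith [hx.2]⟩]
  ring

/-- The value ζ₂PU3(6,6,6): the sum over m,n ≥ 1 with m ≡ n (mod 3) of
1/(m⁶n⁶(m+n)⁶) equals (53109402098/3020275543157103456225)π¹⁸. -/
theorem zeta2_PU3_six_six_six :
    (∑' pr : ℕ × ℕ, (if (pr.1 + 1) % 3 = (pr.2 + 1) % 3 then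
      (1 : ℝ) / (((pr.1 : ℝ) + 1) ^ 6 * ((pr.2 : ℝ) + 1) ^ 6
        * ((pr.1 : ℝ) + (pr.2 : ℝ) + 2) ^ 6) else 0))
    = 53109402098 / 3020275543157103456225 * Real.pi ^ 18 := by
  set a : ℕ → ℝ := fun n => 1 / (n : ℝ) ^ 6
  have ha : Summable a := summable_one_div_nat_pow.2 (by norm_num)
  have ha0 : a 0 = 0 := by simp [a]
  trans ∑' q : ℕ × ℕ, if q.1 % 3 = q.2 % 3 then a q.1 * a q.2 * a (q.1 + q.2) else 0
  · refine (tsum_congr fun q => ?_).trans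
      (tsum_comp_add_one_prod_add_one (by simp [ha0]) (by simp [ha0]))
    simp only [a]
    push_cast
    rw [one_div_mul_one_div, one_div_mul_one_div, add_add_add_comm, one_add_one_eq_two]
  rw [tsum_ite_mod_three_eq_integral ha ha0, integral_cosSeries_one_div_pow_six_cube,
    integral_cosSeries_one_div_pow_six_mul_shift_third]
  ring
end

section
/- Let ϱ = e^{2πi/3}. Then Σ over integers m,n ≥ 1 of ϱ^{2m+n}/(m²·n²·(m+n)²) = (53/229635)·π⁶. -/
/-!
Writing `1 / (m + n)^r` as a Fourier coefficient of the Bernoulli polynomial `B_r` on `[0, 1]`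
and summing the two remaining one-dimensional Fourier series `∑ e^{2πimy} / m^k`, which are again
(periodized) Bernoulli functions, turns the lattice sum over `ℤ²` into `∫₀¹` of a product of three
Bernoulli functions (dominated convergence justifies the interchange). For the twist `ϱ^{2m+n}`
that product is `B̄₂(x) B̄₂(x + 1/3) B̄₂(x + 2/3)`, which has period `1/3`, so the integral is three
times the integral of an explicit polynomial over `[0, 1/3]`. Finally the summand is invariant
under the Weyl group of `SU(3)`, whose six elements carry the positive quadrant bijectively onto
the six open Weyl chambers, so the lattice sum is six times the sum in the theorem.
-/

open Complex

open Real Nat in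
noncomputable def bernoulliFourierFactor (k : ℕ) : ℂ := -(2 * π * I) ^ k / k !

theorem bernoulliFourierFactor_two : bernoulliFourierFactor 2 = 2 * (Real.pi : ℂ) ^ 2 := by
  simp only [bernoulliFourierFactor, mul_pow, I_sq, Nat.factorial_two]
  push_cast
  ring

theorem bernoulliFourierFactor_mul_bernoulliFourierCoeff {k : ℕ} (hk : k ≠ 0) (n : ℤ) :
    bernoulliFourierFactor k * bernoulliFourierCoeff k n = 1 / (n : ℂ) ^ k := by
  have hfact : (k.factorial : ℂ) ≠ 0 := by exact_mod_cast k.factorial_ne_zero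
  have hpi : (2 * (Real.pi : ℂ) * I) ^ k ≠ 0 := pow_ne_zero _ two_pi_I_ne_zero
  rw [bernoulliFourierCoeff_eq hk, bernoulliFourierFactor, mul_pow _ (n : ℂ)]
  field_simp

theorem bernoulliFourierCoeff_eq_intervalIntegral (k : ℕ) (n : ℤ) :
    bernoulliFourierCoeff k n =
      ∫ x in (0 : ℝ)..1, fourier (-n) (x : UnitAddCircle) * bernoulliFun k x := by
  rw [bernoulliFourierCoeff, fourierCoeffOn_eq_integral]
  simp

theorem periodizedBernoulli_coe_of_mem_Icc {k : ℕ} (hk : k ≠ 1) {x : ℝ}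
    (hx : x ∈ Set.Icc (0 : ℝ) 1) : periodizedBernoulli k x = bernoulliFun k x := by
  rcases eq_or_lt_of_le hx.2 with rfl | hx1
  · rw [AddCircle.coe_period, ← QuotientAddGroup.mk_zero, periodizedBernoulli,
      AddCircle.liftIco_coe_apply (by simp), bernoulliFun_endpoints_eq_of_ne_one hk]
  · exact AddCircle.liftIco_coe_apply (by simpa using ⟨hx.1, hx1⟩)

theorem periodizedBernoulli_neg {k : ℕ} (hk : k ≠ 1) (y : UnitAddCircle) :
    periodizedBernoulli k (-y) = (-1) ^ k * periodizedBernoulli k y := by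
  induction y using QuotientAddGroup.induction_on with | H t => ?_
  have ht : Int.fract t ∈ Set.Icc (0 : ℝ) 1 := ⟨Int.fract_nonneg t, (Int.fract_lt_one t).le⟩
  have hneg : -((t : ℝ) : UnitAddCircle) = ((1 - Int.fract t : ℝ) : UnitAddCircle) := by
    rw [AddCircle.coe_sub, AddCircle.coe_fract, AddCircle.coe_period, zero_sub]
  rw [hneg, ← AddCircle.coe_fract t, periodizedBernoulli_coe_of_mem_Icc hk ht,
    periodizedBernoulli_coe_of_mem_Icc hk ⟨by linarith [ht.2], by linarith [ht.1]⟩,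
    bernoulliFun_eval_one_sub]

theorem periodizedBernoulli_sub_comm {k : ℕ} (hk : Even k) (a b : UnitAddCircle) :
    periodizedBernoulli k (a - b) = periodizedBernoulli k (b - a) := by
  have hk1 : k ≠ 1 := by rintro rfl; exact Nat.not_even_one hk
  rw [← neg_sub, periodizedBernoulli_neg hk1, hk.neg_one_pow, one_mul]

theorem hasSum_one_div_pow_mul_fourier_periodizedBernoulli {k : ℕ} (hk : 2 ≤ k)
    (y : UnitAddCircle) :
    HasSum (fun n : ℤ => 1 / (n : ℂ) ^ k * fourier n y)
      (bernoulliFourierFactor k * periodizedBernoulli k y) := by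
  induction y using QuotientAddGroup.induction_on with | H t => ?_
  have ht : Int.fract t ∈ Set.Icc (0 : ℝ) 1 := ⟨Int.fract_nonneg t, (Int.fract_lt_one t).le⟩
  rw [← AddCircle.coe_fract, periodizedBernoulli_coe_of_mem_Icc (by omega) ht]
  exact hasSum_one_div_pow_mul_fourier_mul_bernoulliFun hk ht

theorem fourier_sub_apply {T : ℝ} (n : ℤ) (a x : AddCircle T) :
    fourier n (a - x) = fourier n a * fourier (-n) x := by
  simp [fourier_apply, sub_eq_add_neg, AddCircle.toCircle_add]

theorem summable_norm_one_div_int_pow {k : ℕ} (hk : 2 ≤ k) :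
    Summable fun n : ℤ => ‖1 / (n : ℂ) ^ k‖ :=
  ((Real.summable_one_div_int_pow (p := k)).2 (by omega)).abs.congr fun n => by simp

/-- The terms on the walls `m = 0`, `n = 0`, `m + n = 0` are `0` by the convention `x / 0 = 0`;
this matches the vanishing constant terms of the Bernoulli Fourier series. -/
noncomputable def twistedWittenTerm (p q r : ℕ) (a b : UnitAddCircle) (v : ℤ × ℤ) : ℂ :=
  fourier v.1 a * fourier v.2 b / ((v.1 : ℂ) ^ p * (v.2 : ℂ) ^ q * ((v.1 : ℂ) + v.2) ^ r)

noncomputable def twistedWittenKernel (p q r : ℕ) (a b : UnitAddCircle) (v : ℤ × ℤ) (x : ℝ) :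
    ℂ :=
  bernoulliFourierFactor r * bernoulliFun r x *
    ((1 / (v.1 : ℂ) ^ p * fourier v.1 (a - x : UnitAddCircle)) *
      (1 / (v.2 : ℂ) ^ q * fourier v.2 (b - x : UnitAddCircle)))

section TwistedWittenSum

variable {p q r : ℕ}

theorem twistedWittenTerm_eq_zero_of_wall (hp : p ≠ 0) (hq : q ≠ 0) (hr : r ≠ 0)
    (a b : UnitAddCircle) {v : ℤ × ℤ} (hv : v.1 = 0 ∨ v.2 = 0 ∨ v.1 + v.2 = 0) :
    twistedWittenTerm p q r a b v = 0 := by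
  have hv' : (v.1 : ℂ) = 0 ∨ (v.2 : ℂ) = 0 ∨ (v.1 : ℂ) + v.2 = 0 := by
    rcases hv with h | h | h
    · exact .inl (by simp [h])
    · exact .inr (.inl (by simp [h]))
    · exact .inr (.inr (by exact_mod_cast h))
  rcases hv' with h | h | h <;> simp [twistedWittenTerm, h, hp, hq, hr]

theorem integral_twistedWittenKernel (hr : r ≠ 0) (a b : UnitAddCircle) (v : ℤ × ℤ) :
    ∫ x in (0 : ℝ)..1, twistedWittenKernel p q r a b v x = twistedWittenTerm p q r a b v := by
  have hkernel : twistedWittenKernel p q r a b v = fun x : ℝ =>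
      fourier v.1 a * fourier v.2 b / ((v.1 : ℂ) ^ p * (v.2 : ℂ) ^ q) *
        (bernoulliFourierFactor r *
          (fourier (-(v.1 + v.2)) (x : UnitAddCircle) * (bernoulliFun r x : ℂ))) := by
    funext x
    simp only [twistedWittenKernel, fourier_sub_apply, neg_add, fourier_add]
    ring
  rw [hkernel, intervalIntegral.integral_const_mul, intervalIntegral.integral_const_mul,
    ← bernoulliFourierCoeff_eq_intervalIntegral,
    bernoulliFourierFactor_mul_bernoulliFourierCoeff hr, twistedWittenTerm]
  push_cast
  ring

theorem continuous_twistedWittenKernel (a b : UnitAddCircle) (v : ℤ × ℤ) :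
    Continuous (twistedWittenKernel p q r a b v) := by
  have := continuous_bernoulliFun (k := r)
  unfold twistedWittenKernel
  fun_prop

theorem norm_twistedWittenKernel (a b : UnitAddCircle) (v : ℤ × ℤ) (x : ℝ) :
    ‖twistedWittenKernel p q r a b v x‖ = ‖bernoulliFourierFactor r * bernoulliFun r x‖ *
      (‖1 / (v.1 : ℂ) ^ p‖ * ‖1 / (v.2 : ℂ) ^ q‖) := by
  simp only [twistedWittenKernel, norm_mul, Circle.norm_coe, fourier_apply, mul_one]

theorem hasSum_twistedWittenKernel (hp : 2 ≤ p) (hq : 2 ≤ q) (a b : UnitAddCircle) (x : ℝ) :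
    HasSum (twistedWittenKernel p q r a b · x) (bernoulliFourierFactor r * bernoulliFun r x *
      (bernoulliFourierFactor p * periodizedBernoulli p (a - x) *
        (bernoulliFourierFactor q * periodizedBernoulli q (b - x)))) := by
  have hnorm {k : ℕ} (hk : 2 ≤ k) (y : UnitAddCircle) :
      Summable fun n : ℤ => ‖1 / (n : ℂ) ^ k * fourier n y‖ := by
    simpa [fourier_apply, Circle.norm_coe] using summable_norm_one_div_int_pow hk
  have ha := hasSum_one_div_pow_mul_fourier_periodizedBernoulli hp (a - x)
  have hb := hasSum_one_div_pow_mul_fourier_periodizedBernoulli hq (b - x)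
  have hab := summable_mul_of_summable_norm (hnorm hp (a - x)) (hnorm hq (b - x))
  unfold twistedWittenKernel
  exact (HasSum.mul ha hb hab).mul_left _

theorem hasSum_twistedWittenTerm (hp : 2 ≤ p) (hq : 2 ≤ q) (hr : r ≠ 0) (a b : UnitAddCircle) :
    HasSum (twistedWittenTerm p q r a b)
      (bernoulliFourierFactor p * bernoulliFourierFactor q * bernoulliFourierFactor r *
        ((∫ x in (0 : ℝ)..1,
          bernoulliFun r x * periodizedBernoulli p (a - x) * periodizedBernoulli q (b - x) : ℝ) :
            ℂ)) := by
  have hbound : Summable fun v : ℤ × ℤ => ‖1 / (v.1 : ℂ) ^ p‖ * ‖1 / (v.2 : ℂ) ^ q‖ :=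
    (summable_norm_one_div_int_pow hp).mul_of_nonneg (summable_norm_one_div_int_pow hq)
      (fun _ => norm_nonneg _) (fun _ => norm_nonneg _)
  have hB := continuous_bernoulliFun (k := r)
  have h := intervalIntegral.hasSum_integral_of_dominated_convergence
    (μ := MeasureTheory.volume) (a := 0) (b := 1) (F := twistedWittenKernel p q r a b)
    (fun v x => ‖bernoulliFourierFactor r * bernoulliFun r x‖ *
      (‖1 / (v.1 : ℂ) ^ p‖ * ‖1 / (v.2 : ℂ) ^ q‖))
    (fun v => (continuous_twistedWittenKernel a b v).aestronglyMeasurable)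
    (fun v => .of_forall fun x _ => (norm_twistedWittenKernel a b v x).le)
    (.of_forall fun x _ => hbound.mul_left _)
    (by simp_rw [tsum_mul_left]; exact Continuous.intervalIntegrable (by fun_prop) _ _)
    (.of_forall fun x _ => hasSum_twistedWittenKernel hp hq a b x)
  have hvalue (x : ℝ) : bernoulliFourierFactor r * bernoulliFun r x *
      (bernoulliFourierFactor p * periodizedBernoulli p (a - x) *
        (bernoulliFourierFactor q * periodizedBernoulli q (b - x))) =
      bernoulliFourierFactor p * bernoulliFourierFactor q * bernoulliFourierFactor r *
        ((bernoulliFun r x * periodizedBernoulli p (a - x) * periodizedBernoulli q (b - x) : ℝ) :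
          ℂ) := by
    push_cast
    ring
  simpa only [integral_twistedWittenKernel hr, hvalue, intervalIntegral.integral_const_mul,
    intervalIntegral.integral_ofReal] using h

end TwistedWittenSum

/-- The Weyl group of `SU(3)` acting on the weight lattice in the coordinates `(m, n)` of
`m λ₁ + n λ₂`; the elements `1` and `2` are the simple reflections. -/
def weylA2 : Fin 6 → ℤ × ℤ → ℤ × ℤ
  | 0, (m, n) => (m, n)
  | 1, (m, n) => (-m, m + n)
  | 2, (m, n) => (m + n, -n)
  | 3, (m, n) => (n, -(m + n))
  | 4, (m, n) => (-(m + n), m)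
  | 5, (m, n) => (-n, -m)

def weylChamberEmbedding (x : Fin 6 × ℕ × ℕ) : ℤ × ℤ :=
  weylA2 x.1 ((x.2.1 : ℤ) + 1, (x.2.2 : ℤ) + 1)

theorem weylChamberEmbedding_injective : Function.Injective weylChamberEmbedding := by
  rintro ⟨i, a, b⟩ ⟨j, c, d⟩ h
  fin_cases i <;> fin_cases j <;> simp [weylChamberEmbedding, weylA2] at h ⊢ <;> omega

theorem exists_weylChamberEmbedding_eq {v : ℤ × ℤ} (h₁ : v.1 ≠ 0) (h₂ : v.2 ≠ 0)
    (h₃ : v.1 + v.2 ≠ 0) : ∃ x, weylChamberEmbedding x = v := by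
  obtain ⟨m, n⟩ := v
  simp only at h₁ h₂ h₃
  rcases h₁.lt_or_gt with hm | hm <;> rcases h₂.lt_or_gt with hn | hn
  · exact ⟨(5, (-n - 1).toNat, (-m - 1).toNat), by simp [weylChamberEmbedding, weylA2]; omega⟩
  · rcases h₃.lt_or_gt with hs | hs
    · exact ⟨(4, (n - 1).toNat, (-m - n - 1).toNat), by
        simp [weylChamberEmbedding, weylA2]; omega⟩
    · exact ⟨(1, (-m - 1).toNat, (m + n - 1).toNat), by
        simp [weylChamberEmbedding, weylA2]; omega⟩
  · rcases h₃.lt_or_gt with hs | hs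
    · exact ⟨(3, (-m - n - 1).toNat, (m - 1).toNat), by
        simp [weylChamberEmbedding, weylA2]; omega⟩
    · exact ⟨(2, (m + n - 1).toNat, (-n - 1).toNat), by
        simp [weylChamberEmbedding, weylA2]; omega⟩
  · exact ⟨(0, (m - 1).toNat, (n - 1).toNat), by simp [weylChamberEmbedding, weylA2]; omega⟩

theorem apply_weylA2_eq {β : Type*} {g : ℤ × ℤ → β} (h₁ : ∀ m n, g (-m, m + n) = g (m, n))
    (h₂ : ∀ m n, g (m + n, -n) = g (m, n)) (i : Fin 6) (v : ℤ × ℤ) : g (weylA2 i v) = g v := by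
  obtain ⟨m, n⟩ := v
  have h₁₂ : g (-(m + n), m) = g (m, n) := by
    simpa [neg_add_rev] using (h₁ (m + n) (-n)).trans (h₂ m n)
  have h₂₁ : g (n, -(m + n)) = g (m, n) := by
    simpa using (h₂ (-m) (m + n)).trans (h₁ m n)
  fin_cases i
  · rfl
  · exact h₁ m n
  · exact h₂ m n
  · exact h₂₁
  · exact h₁₂
  · show g (-n, -m) = g (m, n)
    simpa using (h₁ n (-(m + n))).trans h₂₁

theorem tsum_int_prod_eq_six_nsmul_of_weyl_invariant {E : Type*} [NormedAddCommGroup E]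
    [CompleteSpace E] {g : ℤ × ℤ → E} (hg : Summable g)
    (hwall : ∀ v : ℤ × ℤ, v.1 = 0 ∨ v.2 = 0 ∨ v.1 + v.2 = 0 → g v = 0)
    (h₁ : ∀ m n, g (-m, m + n) = g (m, n)) (h₂ : ∀ m n, g (m + n, -n) = g (m, n)) :
    ∑' v, g v = 6 • ∑' p : ℕ × ℕ, g ((p.1 : ℤ) + 1, (p.2 : ℤ) + 1) := by
  have hsupp : Function.support g ⊆ Set.range weylChamberEmbedding := fun v hv =>
    exists_weylChamberEmbedding_eq (fun h => hv (hwall v (.inl h)))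
      (fun h => hv (hwall v (.inr (.inl h)))) (fun h => hv (hwall v (.inr (.inr h))))
  have hchamber (x : Fin 6 × ℕ × ℕ) :
      g (weylChamberEmbedding x) = g ((x.2.1 : ℤ) + 1, (x.2.2 : ℤ) + 1) :=
    apply_weylA2_eq h₁ h₂ _ _
  have hsum : Summable fun x : Fin 6 × ℕ × ℕ => g ((x.2.1 : ℤ) + 1, (x.2.2 : ℤ) + 1) :=
    ((weylChamberEmbedding_injective.summable_iff fun v hv =>
      Function.notMem_support.1 fun h => hv (hsupp h)).2 hg).congr hchamber
  rw [← weylChamberEmbedding_injective.tsum_eq hsupp, tsum_congr hchamber,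
    hsum.tsum_prod' fun i => hsum.comp_injective (Prod.mk_right_injective i), tsum_fintype]
  simp

open Polynomial in
theorem integral_bernoulliFun_two_mul_shift_third :
    ∫ x in (0 : ℝ)..(1 / 3), bernoulliFun 2 x * bernoulliFun 2 (x + 1 / 3) *
      bernoulliFun 2 (x + 2 / 3) = 53 / 918540 := by
  let Q : ℝ[X] := C 7⁻¹ * X ^ 7 - C 6⁻¹ * X ^ 6 - C 90⁻¹ * X ^ 5 + C 18⁻¹ * X ^ 4 -
    C (11 / 972) * X ^ 3 - C 648⁻¹ * X ^ 2 + C 1944⁻¹ * X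
  have hQ (x : ℝ) : HasDerivAt (fun x => Q.eval x)
      (bernoulliFun 2 x * bernoulliFun 2 (x + 1 / 3) * bernoulliFun 2 (x + 2 / 3)) x := by
    refine (Q.hasDerivAt x).congr_deriv ?_
    simp [Q, bernoulliFun_two]
    ring
  have := continuous_bernoulliFun (k := 2)
  rw [intervalIntegral.integral_eq_sub_of_hasDerivAt (fun x _ => hQ x)
    (Continuous.intervalIntegrable (by fun_prop) _ _)]
  norm_num [Q]

theorem integral_periodizedBernoulli_two_mul_shift_third :
    ∫ x in (0 : ℝ)..1, periodizedBernoulli 2 x * periodizedBernoulli 2 ↑(x + 1 / 3) *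
      periodizedBernoulli 2 ↑(x + 2 / 3) = 53 / 306180 := by
  set G : ℝ → ℝ := fun x => periodizedBernoulli 2 x * periodizedBernoulli 2 ↑(x + 1 / 3) *
      periodizedBernoulli 2 ↑(x + 2 / 3) with hG
  have hG_cont : Continuous G := by
    have hP : Continuous fun x : ℝ => periodizedBernoulli 2 x :=
      (periodizedBernoulli.continuous (by norm_num)).comp (AddCircle.continuous_mk' 1)
    exact (hP.mul (hP.comp (continuous_add_const _))).mul (hP.comp (continuous_add_const _))
  have hG_periodic : Function.Periodic G (1 / 3) := fun x => by
    have hcoe : ((x + 1 / 3 + 2 / 3 : ℝ) : UnitAddCircle) = x := by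
      rw [add_assoc, ← AddCircle.coe_add_period 1 x]
      norm_num
    simp only [hG, hcoe]
    ring_nf
  have hG_third : ∫ x in (0 : ℝ)..(1 / 3), G x = 53 / 918540 := by
    rw [← integral_bernoulliFun_two_mul_shift_third]
    refine intervalIntegral.integral_congr fun x hx => ?_
    rw [Set.uIcc_of_le (by norm_num)] at hx
    simp only [hG]
    rw [periodizedBernoulli_coe_of_mem_Icc (by norm_num) ⟨hx.1, by linarith [hx.2]⟩,
      periodizedBernoulli_coe_of_mem_Icc (by norm_num) ⟨by linarith [hx.1], by linarith [hx.2]⟩,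
      periodizedBernoulli_coe_of_mem_Icc (by norm_num) ⟨by linarith [hx.1], by linarith [hx.2]⟩]
  have h := hG_periodic.intervalIntegral_add_zsmul_eq 3 0 fun a b =>
    hG_cont.intervalIntegrable a b
  norm_num at h
  rw [h, hG_third]
  norm_num

theorem integral_bernoulliFun_two_mul_periodizedBernoulli_two_thirds :
    ∫ x in (0 : ℝ)..1, bernoulliFun 2 x *
      periodizedBernoulli 2 (((2 / 3 : ℝ) : UnitAddCircle) - x) *
      periodizedBernoulli 2 (((1 / 3 : ℝ) : UnitAddCircle) - x) = 53 / 306180 := by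
  rw [← integral_periodizedBernoulli_two_mul_shift_third]
  refine intervalIntegral.integral_congr fun x hx => ?_
  rw [Set.uIcc_of_le zero_le_one] at hx
  have hcoe (c : ℝ) :
      (x : UnitAddCircle) - (c : UnitAddCircle) = ((x + (1 - c) : ℝ) : UnitAddCircle) := by
    rw [← AddCircle.coe_sub, ← AddCircle.coe_add_period 1 (x - c)]
    ring_nf
  rw [periodizedBernoulli_coe_of_mem_Icc (by norm_num) hx,
    periodizedBernoulli_sub_comm even_two _ (x : UnitAddCircle),
    periodizedBernoulli_sub_comm even_two _ (x : UnitAddCircle), hcoe, hcoe]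
  norm_num

local notation "ϱ" => Complex.exp (2 * Real.pi * Complex.I / 3)

-- The summand of `ζ₂((2,2,2), λ₁^∨; SU(3))`, extended to all of `ℤ²`.
local notation "T₃" =>
  twistedWittenTerm 2 2 2 ((2 / 3 : ℝ) : UnitAddCircle) ((1 / 3 : ℝ) : UnitAddCircle)

theorem exp_two_pi_I_div_three_zpow_add_three_mul (k j : ℤ) : ϱ ^ (k + 3 * j) = ϱ ^ k := by
  have hcube : ϱ ^ (3 : ℤ) = 1 := by
    rw [← Complex.exp_int_mul]
    push_cast
    rw [show (3 : ℂ) * (2 * Real.pi * I / 3) = 2 * Real.pi * I by ring, Complex.exp_two_pi_mul_I]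
  rw [zpow_add₀ (Complex.exp_ne_zero _), zpow_mul, hcube, one_zpow, mul_one]

theorem twistedWittenTerm_two_thirds_one_third (v : ℤ × ℤ) :
    T₃ v = ϱ ^ (2 * v.1 + v.2) / ((v.1 : ℂ) ^ 2 * (v.2 : ℂ) ^ 2 * ((v.1 : ℂ) + v.2) ^ 2) := by
  rw [twistedWittenTerm, fourier_coe_apply, fourier_coe_apply, ← Complex.exp_add,
    ← Complex.exp_int_mul]
  push_cast
  ring_nf

theorem twistedWittenTerm_two_thirds_one_third_neg_add (m n : ℤ) :
    T₃ (-m, m + n) = T₃ (m, n) := by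
  simp only [twistedWittenTerm_two_thirds_one_third,
    ← exp_two_pi_I_div_three_zpow_add_three_mul (2 * m + n) (-m)]
  push_cast
  ring_nf

theorem twistedWittenTerm_two_thirds_one_third_add_neg (m n : ℤ) :
    T₃ (m + n, -n) = T₃ (m, n) := by
  simp only [twistedWittenTerm_two_thirds_one_third]
  push_cast
  ring_nf

theorem twistedWittenTerm_two_thirds_one_third_natCast_add_one (pr : ℕ × ℕ) :
    T₃ ((pr.1 : ℤ) + 1, (pr.2 : ℤ) + 1) = ϱ ^ (2 * (pr.1 + 1) + (pr.2 + 1)) /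
      (((pr.1 : ℂ) + 1) ^ 2 * ((pr.2 : ℂ) + 1) ^ 2 * ((pr.1 : ℂ) + (pr.2 : ℂ) + 2) ^ 2) := by
  rw [twistedWittenTerm_two_thirds_one_third,
    show 2 * ((pr.1 : ℤ) + 1) + ((pr.2 : ℤ) + 1) = ((2 * (pr.1 + 1) + (pr.2 + 1) : ℕ) : ℤ) by
      push_cast; ring, zpow_natCast]
  push_cast
  ring

theorem hasSum_twistedWittenTerm_two_thirds_one_third :
    HasSum T₃ (106 / 76545 * (Real.pi : ℂ) ^ 6) := by
  have h := hasSum_twistedWittenTerm le_rfl le_rfl two_ne_zero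
    ((2 / 3 : ℝ) : UnitAddCircle) ((1 / 3 : ℝ) : UnitAddCircle)
  rw [integral_bernoulliFun_two_mul_periodizedBernoulli_two_thirds, bernoulliFourierFactor_two]
    at h
  convert h using 1
  push_cast
  ring

/-- With ϱ = e^{2πi/3}, the sum over m,n ≥ 1 of ϱ^{2m+n}/(m²n²(m+n)²)
equals (53/229635)π⁶.  (The value ζ₂((2,2,2), λ₁^∨; SU(3)).) -/
theorem zeta2_SU3_twisted_two_two_two :
    (∑' pr : ℕ × ℕ,
      Complex.exp (2 * Real.pi * Complex.I / 3) ^ (2 * (pr.1 + 1) + (pr.2 + 1))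
        / (((pr.1 : ℂ) + 1) ^ 2 * ((pr.2 : ℂ) + 1) ^ 2
          * ((pr.1 : ℂ) + (pr.2 : ℂ) + 2) ^ 2))
    = 53 / 229635 * (Real.pi : ℂ) ^ 6 := by
  have hS := hasSum_twistedWittenTerm_two_thirds_one_third
  have h6 := tsum_int_prod_eq_six_nsmul_of_weyl_invariant hS.summable
    (fun _ => twistedWittenTerm_eq_zero_of_wall two_ne_zero two_ne_zero two_ne_zero _ _)
    twistedWittenTerm_two_thirds_one_third_neg_add twistedWittenTerm_two_thirds_one_third_add_neg
  rw [hS.tsum_eq, tsum_congr twistedWittenTerm_two_thirds_one_third_natCast_add_one,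
    nsmul_eq_mul] at h6
  linear_combination -h6 / 6
end
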